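/- Let G be a finite connected undirected graph with positive conductances and marked vertex b, and let u≠b be a vertex. Under the probability measure P on two-component spanning forests proportional to weight, the probability that u lies in the floating component Σ equals (κ(G)/κ₂(G))·G_{u,u}. Equivalently, the sum of the weights of all 2SFs whose floating component contains u equals κ(G)·G_{u,u}. -/

import Mathlib

/-!
By the all-minors matrix-tree theorem, the principal minor of the Laplacian with the rows and
columns of a vertex set `W` deleted is the total weight of the spanning forests in which every
component contains exactly one vertex of `W`. For `W = {b}` this is `κ = det Δ_D`, which is
positive because the graph is connected. For `W = {b, u}` it is the weight of the 2SFs with `u`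
in the floating component, and it is also the diagonal cofactor of `Δ_D`, i.e. `κ · G_{u,u}`.

The minor is expanded row by row. Choosing a neighbour `g v` for each `v ∉ W` writes it as a sum,
over the maps `g` fixing `W`, of `∏ c{v, g v} · det (1 - P_g)`, where `P_g` is the matrix of `g`
on `V \ W`. This determinant is `1` if every orbit of `g` enters `W` (then `1 - P_g` is triangular
with respect to the time needed to reach `W`) and `0` otherwise (then the indicator of the orbits
that avoid `W` lies in its kernel). Finally, `g ↦ {{v, g v} | v ∉ W}` is a bijection from the
maps of the first kind onto the rooted forests; its inverse is built by pruning leaves.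
-/

open scoped Classical BigOperators

noncomputable section

namespace TwoSF

variable {V : Type*} [Fintype V] [DecidableEq V]

/-- `u` and `v` are linked by the edges in `B`. -/
def Linked (B : Finset (Sym2 V)) : V → V → Prop :=
  Relation.ReflTransGen fun a b => s(a, b) ∈ B

/-- The number of connected components of the spanning subgraph `(V, B)`. -/
def ncomp (B : Finset (Sym2 V)) : ℕ :=
  Nat.card (Quot (Linked B))

/-- `B` is a spanning forest of the complete graph on `V` with exactly `k`
connected components: it has `k` components and, by the rank count
`|B| + k = |V|`, it is acyclic (in particular it contains no loop edge).
Taking `k = 1` gives spanning trees, `k = 2` gives two-component spanning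
forests (2SF). -/
def IsSF (k : ℕ) (B : Finset (Sym2 V)) : Prop :=
  ncomp B = k ∧ B.card + k = Fintype.card V

/-- The weight of an edge set: the product of its conductances. -/
def wt (c : Sym2 V → ℝ) (B : Finset (Sym2 V)) : ℝ := ∏ e ∈ B, c e

/-- κ: the weighted sum of spanning trees.  Edge sets containing a non-edge
(an `e` with `c e = 0`) contribute weight `0`, so this is the weighted number
of spanning trees of the graph whose edges are the support of `c`. -/
def kappa1 (c : Sym2 V → ℝ) : ℝ := ∑ B ∈ Finset.univ.filter (IsSF 1), wt c B

/-- κ₂: the weighted sum of two-component spanning forests. -/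
def kappa2 (c : Sym2 V → ℝ) : ℝ := ∑ B ∈ Finset.univ.filter (IsSF 2), wt c B

/-- The floating component of `B`: the set of vertices not linked to `b`. -/
def floating (b : V) (B : Finset (Sym2 V)) : Finset V :=
  Finset.univ.filter fun v => ¬ Linked B b v

/-- The graph Laplacian `Δ` of the graph with conductances `c`. -/
def lap (c : Sym2 V → ℝ) : Matrix V V ℝ := fun u v =>
  if u = v then ∑ w ∈ Finset.univ.filter (· ≠ u), c s(u, w) else -c s(u, v)

/-- The Dirichlet Laplacian `Δ_D`, indexed by `V \ {b}`. -/
def dlap (c : Sym2 V → ℝ) (b : V) : Matrix {w : V // w ≠ b} {w : V // w ≠ b} ℝ :=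
  Matrix.of fun p q => lap c p.1 q.1

/-- The Green function with Dirichlet boundary condition at `b` (the inverse of
the Dirichlet Laplacian), with the convention that it vanishes as soon as one
of its arguments is `b`. -/
def green (c : Sym2 V → ℝ) (b : V) (u v : V) : ℝ :=
  if hu : u = b then 0 else if hv : v = b then 0 else (dlap c b)⁻¹ ⟨u, hu⟩ ⟨v, hv⟩

/-- The probability of the event `p` under the probability measure on
two-component spanning forests assigning to each 2SF a probability
proportional to its weight. -/
def pr2 (c : Sym2 V → ℝ) (p : Finset (Sym2 V) → Prop) : ℝ :=
  (∑ B ∈ Finset.univ.filter (fun B => IsSF 2 B ∧ p B), wt c B) / kappa2 c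

/-- The expectation of `((floating b B).card : ℝ) ^ k`, i.e. of `|Σ|^k`, under
the probability measure on two-component spanning forests proportional to
weight. -/
def expPow (c : Sym2 V → ℝ) (b : V) (k : ℕ) : ℝ :=
  (∑ B ∈ Finset.univ.filter (IsSF 2), wt c B * ((floating b B).card : ℝ) ^ k) / kappa2 c

/-- `|∂Σ|`: the sum of the conductances of the edges having exactly one
endpoint in the floating component of `B`. -/
def bdryWt (c : Sym2 V → ℝ) (b : V) (B : Finset (Sym2 V)) : ℝ :=
  ∑ u ∈ floating b B, ∑ v ∈ (floating b B)ᶜ, c s(u, v)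

/-- The expectation of `|∂Σ|` under the probability measure on two-component
spanning forests proportional to weight. -/
def expBdry (c : Sym2 V → ℝ) (b : V) : ℝ :=
  (∑ B ∈ Finset.univ.filter (IsSF 2), wt c B * bdryWt c b B) / kappa2 c

end TwoSF

theorem Matrix.adjugate_apply_self {ι R : Type*} [Fintype ι] [DecidableEq ι] [CommRing R]
    (M : Matrix ι ι R) (i : ι) :
    M.adjugate i i = (M.submatrix (Subtype.val : {j // j ≠ i} → ι) Subtype.val).det := by
  rw [Matrix.adjugate_apply, Matrix.twoBlockTriangular_det _ (· ≠ i) fun k hk j hj => by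
    rw [not_not.mp hk, Matrix.updateRow_self, Pi.single_eq_of_ne hj]]
  have : Subsingleton {j // ¬ j ≠ i} :=
    ⟨fun a b => Subtype.ext ((not_not.mp a.2).trans (not_not.mp b.2).symm)⟩
  rw [Matrix.det_eq_elem_of_subsingleton (Matrix.toSquareBlockProp _ fun j => ¬ j ≠ i)
    ⟨i, fun h => h rfl⟩]
  simp only [Matrix.toSquareBlockProp_def, Matrix.of_apply, Matrix.updateRow_self,
    Pi.single_eq_same, mul_one]
  congr 1
  ext k j
  rw [Matrix.of_apply, Matrix.updateRow_ne k.2]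
  rfl

namespace TwoSF

section Linked

variable {V : Type*} {B B' : Finset (Sym2 V)} {a b x y : V}

lemma Linked.symm (h : Linked B x y) : Linked B y x :=
  have : Std.Symm fun a b => s(a, b) ∈ B := ⟨fun a b hab => by rwa [Sym2.eq_swap]⟩
  Relation.ReflTransGen.stdSymm.symm _ _ h

lemma linked_equivalence (B : Finset (Sym2 V)) : Equivalence (Linked B) :=
  ⟨fun _ => .refl, Linked.symm, .trans⟩

lemma Linked.mono (h : B ⊆ B') (hl : Linked B x y) : Linked B' x y :=
  Relation.ReflTransGen.mono (fun _ _ hab => h hab) _ _ hl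

lemma linked_of_mem (h : s(x, y) ∈ B) : Linked B x y := .single h

lemma Linked.eq_of_isolated (hl : Linked B a x) (h : ∀ e ∈ B, a ∉ e) : a = x := by
  rcases hl.cases_head with rfl | ⟨_, hc, -⟩
  · rfl
  · exact absurd (Sym2.mem_mk_left _ _) (h _ hc)

lemma Linked.exists_edge_ne (h : Linked B a x) (hne : a ≠ x) : ∃ z ≠ a, s(a, z) ∈ B := by
  induction h using Relation.ReflTransGen.head_induction_on with
  | refl => exact absurd rfl hne
  | @head b c hbc _ ih =>
    by_cases hcb : c = b
    · subst hcb
      exact ih hne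
    · exact ⟨c, hcb, hbc⟩

lemma linked_insert_iff [DecidableEq V] :
    Linked (insert s(x, y) B) a b ↔
      Linked B a b ∨ (Linked B a x ∧ Linked B y b) ∨ (Linked B a y ∧ Linked B x b) := by
  constructor
  · intro h
    induction h with
    | refl => exact Or.inl .refl
    | @tail c d _ hcd ih =>
      rcases Finset.mem_insert.mp hcd with he | hB
      · rcases Sym2.eq_iff.mp he with ⟨rfl, rfl⟩ | ⟨rfl, rfl⟩
        · rcases ih with h | ⟨h, -⟩ | ⟨h, -⟩
          exacts [Or.inr (Or.inl ⟨h, .refl⟩), Or.inr (Or.inl ⟨h, .refl⟩), Or.inl h]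
        · rcases ih with h | ⟨h, -⟩ | ⟨h, -⟩
          exacts [Or.inr (Or.inr ⟨h, .refl⟩), Or.inl h, Or.inr (Or.inr ⟨h, .refl⟩)]
      · rcases ih with h | ⟨h, h'⟩ | ⟨h, h'⟩
        exacts [Or.inl (h.tail hB), Or.inr (Or.inl ⟨h, h'.tail hB⟩),
          Or.inr (Or.inr ⟨h, h'.tail hB⟩)]
  · have hsub := Finset.subset_insert s(x, y) B
    have hxy : Linked (insert s(x, y) B) x y := linked_of_mem (Finset.mem_insert_self _ _)
    rintro (h | ⟨h, h'⟩ | ⟨h, h'⟩)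
    · exact h.mono hsub
    · exact ((h.mono hsub).trans hxy).trans (h'.mono hsub)
    · exact ((h.mono hsub).trans hxy.symm).trans (h'.mono hsub)

lemma linked_insert_of_linked [DecidableEq V] (h : Linked B x y) :
    Linked (insert s(x, y) B) = Linked B := by
  ext a b
  refine linked_insert_iff.trans ⟨?_, Or.inl⟩
  rintro (h' | ⟨ha, hb⟩ | ⟨ha, hb⟩)
  exacts [h', (ha.trans h).trans hb, (ha.trans h.symm).trans hb]

end Linked

section Components

variable {V : Type*} {B : Finset (Sym2 V)} {x y : V}

lemma mk_eq_mk_iff_linked :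
    Quot.mk (Linked B) x = Quot.mk (Linked B) y ↔ Linked B x y :=
  ⟨fun h => (linked_equivalence B).eqvGen_iff.mp (Quot.eqvGen_exact h), Quot.sound⟩

lemma ncomp_empty [Fintype V] : ncomp (∅ : Finset (Sym2 V)) = Fintype.card V := by
  have hinj : Function.Injective (Quot.mk (Linked (∅ : Finset (Sym2 V)))) := fun _ _ h =>
    (mk_eq_mk_iff_linked.mp h).eq_of_isolated fun e he => absurd he (Finset.notMem_empty e)
  rw [ncomp, ← Nat.card_eq_fintype_card]
  exact (Nat.card_eq_of_bijective _ ⟨hinj, Quot.mk_surjective⟩).symm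

lemma ncomp_insert_of_not_linked [DecidableEq V] [Finite V] (h : ¬ Linked B x y) :
    ncomp (insert s(x, y) B) + 1 = ncomp B := by
  let π : Quot (Linked B) → Quot (Linked (insert s(x, y) B)) :=
    Quot.map id fun _ _ hab => hab.mono (Finset.subset_insert _ _)
  let qy := Quot.mk (Linked B) y
  have hinj : Function.Injective fun q : {q // q ≠ qy} => π q := by
    rintro ⟨⟨a⟩, ha⟩ ⟨⟨b⟩, hb⟩ hab
    simp only [π, Quot.map, id, mk_eq_mk_iff_linked, linked_insert_iff] at hab
    rcases hab with hab | ⟨-, hyb⟩ | ⟨hay, -⟩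
    · exact Subtype.ext (Quot.sound hab)
    · exact absurd (Quot.sound hyb.symm) hb
    · exact absurd (Quot.sound hay) ha
  have hsurj : Function.Surjective fun q : {q // q ≠ qy} => π q := by
    rintro ⟨v⟩
    by_cases hv : Linked B v y
    · refine ⟨⟨Quot.mk _ x, fun hxy => h (mk_eq_mk_iff_linked.mp hxy)⟩, Quot.sound ?_⟩
      exact (linked_of_mem (Finset.mem_insert_self _ _)).trans
        (hv.mono (Finset.subset_insert _ _)).symm
    · exact ⟨⟨Quot.mk _ v, fun h => hv (mk_eq_mk_iff_linked.mp h)⟩, rfl⟩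
  rw [ncomp, ncomp, ← Nat.card_congr (Equiv.optionSubtypeNe qy), Finite.card_option,
    Nat.card_eq_of_bijective _ ⟨hinj, hsurj⟩]

lemma exists_spanning_forest [Fintype V] [DecidableEq V] (B : Finset (Sym2 V)) :
    ∃ T ⊆ B, Linked T = Linked B ∧ T.card + ncomp T = Fintype.card V := by
  induction B using Finset.induction_on with
  | empty => exact ⟨∅, subset_rfl, rfl, by rw [Finset.card_empty, ncomp_empty, zero_add]⟩
  | @insert e B _ ih =>
    obtain ⟨T, hTB, hlink, hcard⟩ := ih
    induction e using Sym2.ind with | _ x y => ?_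
    by_cases hxy : Linked B x y
    · exact ⟨T, hTB.trans (Finset.subset_insert _ _), by rw [hlink, linked_insert_of_linked hxy],
        hcard⟩
    · have hxyT : ¬ Linked T x y := hlink ▸ hxy
      have hnew : s(x, y) ∉ T := fun h => hxyT (linked_of_mem h)
      refine ⟨insert s(x, y) T, Finset.insert_subset_insert _ hTB, ?_, ?_⟩
      · ext a b
        rw [linked_insert_iff, linked_insert_iff, hlink]
      · have := ncomp_insert_of_not_linked hxyT
        rw [Finset.card_insert_of_notMem hnew]
        omega

variable [Finite V] {W : Finset V}

lemma card_le_ncomp (hW : (W : Set V).Pairwise fun a b => ¬ Linked B a b) :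
    W.card ≤ ncomp B := by
  rw [ncomp, ← Nat.card_eq_finsetCard]
  refine Nat.card_le_card_of_injective (fun w => Quot.mk _ w.1) fun a b hab => ?_
  by_contra hne
  exact hW a.2 b.2 (Subtype.coe_ne_coe.mpr hne) (mk_eq_mk_iff_linked.mp hab)

lemma ncomp_le_card (hW : ∀ v, ∃ w ∈ W, Linked B v w) : ncomp B ≤ W.card := by
  rw [ncomp, ← Nat.card_eq_finsetCard]
  refine Nat.card_le_card_of_surjective (fun w : W => Quot.mk _ w.1) ?_
  rintro ⟨v⟩
  obtain ⟨w, hw, hvw⟩ := hW v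
  exact ⟨⟨w, hw⟩, Quot.sound hvw.symm⟩

lemma ncomp_eq_card_iff [DecidableEq V] (hW : (W : Set V).Pairwise fun a b => ¬ Linked B a b) :
    ncomp B = W.card ↔ ∀ v, ∃ w ∈ W, Linked B v w := by
  refine ⟨fun h v => ?_, fun h => (ncomp_le_card h).antisymm (card_le_ncomp hW)⟩
  by_contra! hv
  have hvW : v ∉ W := fun hvW => hv v hvW .refl
  have := card_le_ncomp (B := B) (W := insert v W) <| by
    rw [Finset.coe_insert, Set.pairwise_insert]
    exact ⟨hW, fun w hw _ => ⟨hv w hw, fun h => hv w hw h.symm⟩⟩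
  rw [Finset.card_insert_of_notMem hvW] at this
  omega

end Components

section RootedForest

variable {V : Type*} [Fintype V] {W : Finset V} {B : Finset (Sym2 V)}

/-- A spanning forest each of whose components contains exactly one vertex of `W`; the edge count
`|B| = |V| - |W|` rules out cycles. -/
def IsRootedForest (W : Finset V) (B : Finset (Sym2 V)) : Prop :=
  ncomp B = W.card ∧ B.card + W.card = Fintype.card V ∧
    (W : Set V).Pairwise fun a b => ¬ Linked B a b

lemma isRootedForest_singleton_iff {b : V} : IsRootedForest {b} B ↔ IsSF 1 B := by
  simp [IsRootedForest, IsSF]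

lemma isRootedForest_pair_iff [DecidableEq V] {b u : V} (hu : u ≠ b) :
    IsRootedForest {b, u} B ↔ IsSF 2 B ∧ u ∈ floating b B := by
  have hpair : ((({b, u} : Finset V) : Set V).Pairwise fun a b => ¬ Linked B a b) ↔
      ¬ Linked B b u := by
    rw [Finset.coe_pair, Set.pairwise_pair]
    exact ⟨fun h => (h hu.symm).1, fun h _ => ⟨h, fun h' => h h'.symm⟩⟩
  simp only [IsRootedForest, IsSF, Finset.card_pair hu.symm, hpair, floating,
    Finset.mem_filter, Finset.mem_univ, true_and, and_assoc]

lemma IsRootedForest.exists_linked [DecidableEq V] (hB : IsRootedForest W B) (v : V) :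
    ∃ w ∈ W, Linked B v w :=
  (ncomp_eq_card_iff hB.2.2).mp hB.1 v

lemma sum_card_filter_mem_le [DecidableEq V] (B : Finset (Sym2 V)) :
    ∑ v, (B.filter (v ∈ ·)).card ≤ 2 * B.card := by
  simp only [Finset.card_filter]
  rw [Finset.sum_comm, mul_comm, ← smul_eq_mul, ← Finset.sum_const]
  refine Finset.sum_le_sum fun e _ => ?_
  rw [← Finset.card_filter]
  induction e using Sym2.ind with | _ x y => ?_
  calc (Finset.univ.filter (· ∈ s(x, y))).card = ({x, y} : Finset V).card := by
        congr 1; ext; simp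
    _ ≤ 2 := Finset.card_le_two

lemma IsRootedForest.exists_leaf [DecidableEq V] (hB : IsRootedForest W B) (hW : ∃ v, v ∉ W) :
    ∃ u ∉ W, ∃ z ≠ u, s(u, z) ∈ B ∧ ∀ e ∈ B, u ∈ e → e = s(u, z) := by
  have hedge : ∀ v ∉ W, ∃ z ≠ v, s(v, z) ∈ B := fun v hv => by
    obtain ⟨w, hw, hvw⟩ := hB.exists_linked v
    exact hvw.exists_edge_ne (ne_of_mem_of_not_mem hw hv).symm
  by_contra! hno
  let deg v := (B.filter (v ∈ ·)).card
  have hleaf : ∀ v ∉ W, 2 ≤ deg v := fun v hv => by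
    obtain ⟨z, hzv, hz⟩ := hedge v hv
    obtain ⟨e, he, hve, hez⟩ := hno v hv z hzv hz
    rw [← Finset.card_pair hez]
    refine Finset.card_le_card (Finset.insert_subset ?_ (Finset.singleton_subset_iff.mpr ?_))
    exacts [Finset.mem_filter.mpr ⟨he, hve⟩,
      Finset.mem_filter.mpr ⟨hz, Sym2.mem_mk_left _ _⟩]
  obtain ⟨v₀, hv₀⟩ := hW
  obtain ⟨w₀, hw₀, hv₀w₀⟩ := hB.exists_linked v₀
  obtain ⟨z₀, -, hz₀⟩ := hv₀w₀.symm.exists_edge_ne (ne_of_mem_of_not_mem hw₀ hv₀)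
  have hroot : 0 < deg w₀ :=
    Finset.card_pos.mpr ⟨_, Finset.mem_filter.mpr ⟨hz₀, Sym2.mem_mk_left _ _⟩⟩
  have hroots : deg w₀ ≤ ∑ v ∈ W, deg v :=
    Finset.single_le_sum (fun _ _ => Nat.zero_le _) hw₀
  have hleaves : Wᶜ.card * 2 ≤ ∑ v ∈ Wᶜ, deg v :=
    Finset.card_nsmul_le_sum _ _ _ fun v hv => hleaf v (Finset.mem_compl.mp hv)
  have hsum : ∑ v ∈ W, deg v + ∑ v ∈ Wᶜ, deg v ≤ 2 * B.card := by
    rw [Finset.sum_add_sum_compl]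
    exact sum_card_filter_mem_le B
  have := Finset.card_compl W
  have := hB.2.1
  omega

lemma IsRootedForest.erase_leaf [DecidableEq V] (hB : IsRootedForest W B) {u z : V} (hu : u ∉ W)
    (hzu : z ≠ u) (hz : s(u, z) ∈ B) (hleaf : ∀ e ∈ B, u ∈ e → e = s(u, z)) :
    IsRootedForest (insert u W) (B.erase s(u, z)) := by
  have hiso : ∀ e ∈ B.erase s(u, z), u ∉ e := fun e he hue =>
    (Finset.mem_erase.mp he).1 (hleaf e (Finset.mem_of_mem_erase he) hue)
  have hncomp := ncomp_insert_of_not_linked fun h => hzu (h.eq_of_isolated hiso).symm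
  rw [Finset.insert_erase hz] at hncomp
  have hcard := Finset.card_erase_add_one hz
  refine ⟨?_, ?_, ?_⟩
  · rw [Finset.card_insert_of_notMem hu]
    linarith [hB.1]
  · rw [Finset.card_insert_of_notMem hu]
    linarith [hB.2.1]
  · rw [Finset.coe_insert, Set.pairwise_insert]
    refine ⟨hB.2.2.mono' fun a b h h' => h (h'.mono (Finset.erase_subset _ _)), ?_⟩
    intro w _ huw
    exact ⟨fun h => huw (h.eq_of_isolated hiso), fun h => huw (h.symm.eq_of_isolated hiso)⟩

end RootedForest

section RootedMap

variable {V : Type*} {W : Finset V} {g g' : V → V} {u z : V}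

def ReachesRoots (W : Finset V) (g : V → V) : Prop := ∀ v, ∃ n, g^[n] v ∈ W

lemma iterate_add_eq_of_mem (hfix : ∀ v ∈ W, g v = v) {v : V} {m : ℕ}
    (hm : g^[m] v ∈ W) (k : ℕ) : g^[k + m] v = g^[m] v := by
  rw [Function.iterate_add_apply]
  exact Function.iterate_fixed (hfix _ hm) k

lemma iterate_eq_of_mem (hfix : ∀ v ∈ W, g v = v) {v : V} {m n : ℕ}
    (hm : g^[m] v ∈ W) (hn : g^[n] v ∈ W) : g^[m] v = g^[n] v := by
  rcases le_total m n with h | h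
  · rw [← Nat.sub_add_cancel h, iterate_add_eq_of_mem hfix hm]
  · rw [← Nat.sub_add_cancel h, iterate_add_eq_of_mem hfix hn]

lemma ReachesRoots.apply_apply_ne (hr : ReachesRoots W g) (hfix : ∀ v ∈ W, g v = v) {v : V}
    (hv : v ∉ W) : g (g v) ≠ v := by
  intro h2
  have hgv : g v ∉ W := fun h => hv (by rwa [← h2, hfix _ h])
  have horbit : ∀ n, g^[n] v = v ∨ g^[n] v = g v := by
    intro n
    induction n with
    | zero => exact Or.inl rfl
    | succ n ih =>
      rw [Function.iterate_succ_apply']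
      rcases ih with h | h <;> rw [h]
      exacts [Or.inr rfl, Or.inl h2]
  obtain ⟨n, hn⟩ := hr v
  rcases horbit n with h | h <;> rw [h] at hn
  exacts [hv hn, hgv hn]

variable [Fintype V] [DecidableEq V]

def edgesOf (W : Finset V) (g : V → V) : Finset (Sym2 V) := Wᶜ.image fun v => s(v, g v)

lemma ReachesRoots.injOn_edge (hr : ReachesRoots W g) (hfix : ∀ v ∈ W, g v = v) :
    Set.InjOn (fun v => s(v, g v)) ↑(Wᶜ) := by
  intro v hv x _ h
  rcases Sym2.eq_iff.mp h with ⟨h, -⟩ | ⟨h₁, h₂⟩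
  · exact h
  · exact absurd (by rw [h₂, ← h₁]) (hr.apply_apply_ne hfix (Finset.mem_compl.mp hv))

lemma ReachesRoots.card_edgesOf (hr : ReachesRoots W g) (hfix : ∀ v ∈ W, g v = v) :
    (edgesOf W g).card = Wᶜ.card :=
  Finset.card_image_of_injOn (hr.injOn_edge hfix)

lemma ReachesRoots.wt_edgesOf (hr : ReachesRoots W g) (hfix : ∀ v ∈ W, g v = v)
    (c : Sym2 V → ℝ) : wt c (edgesOf W g) = ∏ v ∈ Wᶜ, c s(v, g v) :=
  Finset.prod_image (hr.injOn_edge hfix)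

lemma linked_edgesOf_apply (hfix : ∀ v ∈ W, g v = v) (v : V) :
    Linked (edgesOf W g) v (g v) := by
  by_cases hv : v ∈ W
  · rw [hfix v hv]
    exact .refl
  · exact linked_of_mem (Finset.mem_image_of_mem _ (Finset.mem_compl.mpr hv))

lemma linked_edgesOf_iterate (hfix : ∀ v ∈ W, g v = v) (v : V) (n : ℕ) :
    Linked (edgesOf W g) v (g^[n] v) := by
  induction n with
  | zero => exact .refl
  | succ n ih =>
    rw [Function.iterate_succ_apply']
    exact ih.trans (linked_edgesOf_apply hfix _)

lemma iterate_eq_of_linked_edgesOf (hfix : ∀ v ∈ W, g v = v) {a b : V}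
    (hab : Linked (edgesOf W g) a b) {m n : ℕ} (hm : g^[m] a ∈ W) (hn : g^[n] b ∈ W) :
    g^[m] a = g^[n] b := by
  induction hab generalizing n with
  | refl => exact iterate_eq_of_mem hfix hm hn
  | @tail b c _ hbc ih =>
    obtain ⟨x, -, hx⟩ := Finset.mem_image.mp hbc
    rcases Sym2.eq_iff.mp hx with ⟨rfl, rfl⟩ | ⟨rfl, rfl⟩
    · rw [ih (n := n + 1) (by rwa [Function.iterate_succ_apply])]
      rfl
    · have hn' : g^[n] (g x) ∈ W := by
        rwa [← Function.iterate_succ_apply, Function.iterate_succ_apply', hfix _ hn]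
      rw [ih hn', ← Function.iterate_succ_apply, Function.iterate_succ_apply', hfix _ hn]

lemma ReachesRoots.isRootedForest_edgesOf (hr : ReachesRoots W g) (hfix : ∀ v ∈ W, g v = v) :
    IsRootedForest W (edgesOf W g) := by
  have hpair : (W : Set V).Pairwise fun a b => ¬ Linked (edgesOf W g) a b :=
    fun a ha b _ hab h => hab (iterate_eq_of_linked_edgesOf hfix h (m := 0) (n := 0) ha ‹_›)
  refine ⟨(ncomp_eq_card_iff hpair).mpr fun v => ?_, ?_, hpair⟩
  · obtain ⟨n, hn⟩ := hr v
    exact ⟨_, hn, linked_edgesOf_iterate hfix v n⟩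
  · rw [hr.card_edgesOf hfix, Finset.card_compl, Nat.sub_add_cancel (Finset.card_le_univ W)]

lemma ReachesRoots.eq_of_edgesOf_eq (hr : ReachesRoots W g) (hfix : ∀ v ∈ W, g v = v)
    (hfix' : ∀ v ∈ W, g' v = v) (h : edgesOf W g = edgesOf W g') : g = g' := by
  have key : ∀ n v, g^[n] v ∈ W → g v = g' v := by
    intro n
    induction n with
    | zero => exact fun v hv => by rw [hfix v hv, hfix' v hv]
    | succ n ih =>
      intro v hn
      by_cases hv : v ∈ W
      · rw [hfix v hv, hfix' v hv]
      have hmem : s(v, g v) ∈ edgesOf W g' :=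
        h ▸ Finset.mem_image_of_mem _ (Finset.mem_compl.mpr hv)
      obtain ⟨x, -, hx⟩ := Finset.mem_image.mp hmem
      rcases Sym2.eq_iff.mp hx with ⟨rfl, hx'⟩ | ⟨rfl, hx'⟩
      · exact hx'.symm
      · have hgg : g (g v) = g' (g v) := ih (g v) (by rwa [← Function.iterate_succ_apply])
        exact absurd (hgg.trans hx') (hr.apply_apply_ne hfix hv)
  funext v
  obtain ⟨n, hn⟩ := hr v
  exact key n v hn

lemma ReachesRoots.update (hr : ReachesRoots (insert u W) g) (hfix : ∀ v ∈ insert u W, g v = v)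
    (hiso : ∀ e ∈ edgesOf (insert u W) g, u ∉ e) (hzu : z ≠ u) :
    ReachesRoots W (Function.update g u z) := by
  -- orbits stay inside components, so an orbit not starting at the isolated vertex `u` avoids it
  have away : ∀ n v, ¬ Linked (edgesOf (insert u W) g) v u → g^[n] v ∈ insert u W →
      (Function.update g u z)^[n] v ∈ W := by
    intro n
    induction n with
    | zero =>
      intro v hvu hv
      exact (Finset.mem_insert.mp hv).resolve_left fun h => hvu (h ▸ .refl)
    | succ n ih =>
      intro v hvu hn
      have hv : v ≠ u := fun h => hvu (h ▸ .refl)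
      rw [Function.iterate_succ_apply, Function.update_of_ne hv]
      exact ih _ (fun h => hvu ((linked_edgesOf_apply hfix v).trans h)) hn
  intro v
  rcases eq_or_ne v u with rfl | hvu
  · obtain ⟨n, hn⟩ := hr z
    refine ⟨n + 1, ?_⟩
    rw [Function.iterate_succ_apply, Function.update_self]
    exact away n z (fun h => hzu (h.symm.eq_of_isolated hiso).symm) hn
  · obtain ⟨n, hn⟩ := hr v
    exact ⟨n, away n v (fun h => hvu (h.symm.eq_of_isolated hiso).symm) hn⟩

lemma edgesOf_update (hu : u ∉ W) :
    edgesOf W (Function.update g u z) = insert s(u, z) (edgesOf (insert u W) g) := by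
  have hcompl : Wᶜ = insert u (insert u W)ᶜ := by
    ext v
    by_cases hvu : v = u <;> simp [hvu, hu]
  rw [edgesOf, hcompl, Finset.image_insert, Function.update_self, edgesOf]
  congr 1
  refine Finset.image_congr fun v hv => ?_
  have hvu : v ≠ u := fun h => Finset.mem_compl.mp hv (h ▸ Finset.mem_insert_self u W)
  simp only [Function.update_of_ne hvu]

lemma IsRootedForest.exists_edgesOf_eq {W : Finset V} {B : Finset (Sym2 V)}
    (hB : IsRootedForest W B) :
    ∃ g : V → V, (∀ v ∈ W, g v = v) ∧ ReachesRoots W g ∧ edgesOf W g = B := by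
  obtain rfl | hW := eq_or_ne W Finset.univ
  · have hBempty : B = ∅ := by
      have := hB.2.1
      rw [Finset.card_univ] at this
      exact Finset.card_eq_zero.mp (by omega)
    exact ⟨id, fun _ _ => rfl, fun v => ⟨0, Finset.mem_univ v⟩,
      by rw [edgesOf, Finset.compl_univ, Finset.image_empty, hBempty]⟩
  obtain ⟨u, hu, z, hzu, hz, hleaf⟩ :=
    hB.exists_leaf (by simpa [Finset.eq_univ_iff_forall] using hW)
  obtain ⟨g, hfix, hr, hgB⟩ := (hB.erase_leaf hu hzu hz hleaf).exists_edgesOf_eq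
  have hiso : ∀ e ∈ edgesOf (insert u W) g, u ∉ e := fun e he hue => by
    rw [hgB] at he
    exact (Finset.mem_erase.mp he).1 (hleaf e (Finset.mem_of_mem_erase he) hue)
  refine ⟨_, fun v hv => ?_, hr.update hfix hiso hzu,
    by rw [edgesOf_update hu, hgB, Finset.insert_erase hz]⟩
  rw [Function.update_of_ne (ne_of_mem_of_not_mem hv hu)]
  exact hfix v (Finset.mem_insert_of_mem hv)
termination_by Wᶜ.card
decreasing_by
  exact Finset.card_lt_card (Finset.compl_ssubset_compl.mpr (Finset.ssubset_insert hu))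

lemma sum_reachesRoots_eq_sum_isRootedForest (c : Sym2 V → ℝ) (W : Finset V) :
    ∑ g ∈ Finset.univ.filter (fun g : V → V => (∀ v ∈ W, g v = v) ∧ ReachesRoots W g),
      ∏ v ∈ Wᶜ, c s(v, g v) = ∑ B ∈ Finset.univ.filter (IsRootedForest W), wt c B := by
  refine Finset.sum_bij (fun g _ => edgesOf W g) ?_ ?_ ?_ ?_
  · intro g hg
    simp only [Finset.mem_filter, Finset.mem_univ, true_and] at hg ⊢
    exact hg.2.isRootedForest_edgesOf hg.1
  · intro g hg g' hg' h
    simp only [Finset.mem_filter, Finset.mem_univ, true_and] at hg hg'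
    exact hg.2.eq_of_edgesOf_eq hg.1 hg'.1 h
  · intro B hB
    obtain ⟨g, hfix, hr, rfl⟩ := (Finset.mem_filter.mp hB).2.exists_edgesOf_eq
    exact ⟨g, Finset.mem_filter.mpr ⟨Finset.mem_univ _, hfix, hr⟩, rfl⟩
  · intro g hg
    simp only [Finset.mem_filter, Finset.mem_univ, true_and] at hg
    exact (hg.2.wt_edgesOf hg.1 c).symm

end RootedMap

section StepMatrix

variable {V : Type*} [DecidableEq V] {W : Finset V} {g : V → V}

def stepMatrix (W : Finset V) (g : V → V) : Matrix {v // v ∉ W} {v // v ∉ W} ℝ :=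
  Matrix.of fun p q => if (q : V) = g p then 1 else 0

variable [Fintype V]

lemma det_one_sub_stepMatrix_of_reachesRoots (hr : ReachesRoots W g) :
    (1 - stepMatrix W g).det = 1 := by
  let height : {v // v ∉ W} → ℕ := fun p => Nat.find (hr p)
  have hdesc : ∀ p q : {v // v ∉ W}, (q : V) = g p → height q < height p := by
    intro p q hq
    have hpos : height p ≠ 0 := fun h => p.2 (by simpa [height, h] using Nat.find_spec (hr p))
    refine lt_of_le_of_lt (Nat.find_min' (hr q) ?_) (Nat.sub_lt (Nat.pos_of_ne_zero hpos) one_pos)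
    rw [hq, ← Function.iterate_succ_apply, Nat.succ_eq_add_one, Nat.sub_one_add_one hpos]
    exact Nat.find_spec (hr p)
  have hentry : ∀ p q, height p ≤ height q →
      (1 - stepMatrix W g) p q = if p = q then 1 else 0 := by
    intro p q hpq
    rw [Matrix.sub_apply, Matrix.one_apply, stepMatrix, Matrix.of_apply,
      if_neg fun h => (hdesc p q h).not_ge hpq, sub_zero]
  have htri : (1 - stepMatrix W g).BlockTriangular (OrderDual.toDual ∘ height) :=
    fun p q hlt => by rw [hentry p q hlt.le, if_neg fun h => (h ▸ hlt).false]
  rw [htri.det]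
  refine Finset.prod_eq_one fun a _ => ?_
  have hblock : (1 - stepMatrix W g).toSquareBlock (OrderDual.toDual ∘ height) a = 1 := by
    ext p q
    rw [Matrix.toSquareBlock_def, Matrix.of_apply,
      hentry p q (OrderDual.toDual.injective (p.2.trans q.2.symm)).le, Matrix.one_apply]
    exact if_congr Subtype.ext_iff.symm rfl rfl
  rw [hblock, Matrix.det_one]

lemma det_one_sub_stepMatrix_of_not_reachesRoots (hr : ¬ ReachesRoots W g) :
    (1 - stepMatrix W g).det = 0 := by
  let f : {v // v ∉ W} → ℝ := fun p => if ∀ n, g^[n] p ∉ W then 1 else 0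
  obtain ⟨v, hv⟩ : ∃ v, ∀ n, g^[n] v ∉ W := by simpa [ReachesRoots] using hr
  refine Matrix.exists_mulVec_eq_zero_iff.mp ⟨f, fun hf => ?_, ?_⟩
  · have := congr_fun hf ⟨v, hv 0⟩
    simp only [f, if_pos hv, Pi.zero_apply] at this
    exact one_ne_zero this
  · rw [Matrix.sub_mulVec, Matrix.one_mulVec, sub_eq_zero]
    ext p
    simp only [Matrix.mulVec, dotProduct, stepMatrix, Matrix.of_apply, ite_mul, one_mul, zero_mul]
    by_cases hgp : g p ∈ W
    · rw [Finset.sum_eq_zero fun q _ => if_neg fun hq => q.2 (hq ▸ hgp)]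
      exact if_neg fun h => h 1 hgp
    · rw [Fintype.sum_eq_single ⟨g p, hgp⟩ fun q hq => if_neg fun h => hq (Subtype.ext h),
        if_pos rfl]
      refine if_congr ⟨fun h n => ?_, fun h n => ?_⟩ rfl rfl
      · simpa only [Function.iterate_succ_apply] using h (n + 1)
      · cases n with
        | zero => exact p.2
        | succ n => simpa only [Function.iterate_succ_apply] using h n

end StepMatrix

section MatrixTree

variable {V : Type*} [Fintype V] [DecidableEq V]

def dirichletLap (c : Sym2 V → ℝ) (W : Finset V) : Matrix {v // v ∉ W} {v // v ∉ W} ℝ :=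
  (lap c).submatrix Subtype.val Subtype.val

/-- The term `z = p` is zero, which accounts for `lap` summing over `w ≠ p` only. -/
lemma dirichletLap_row (c : Sym2 V → ℝ) (W : Finset V) (p : {v // v ∉ W}) :
    dirichletLap c W p = ∑ z, c s(p, z) • (1 - stepMatrix W fun _ => z) p := by
  ext q
  simp only [dirichletLap, lap, stepMatrix, Matrix.submatrix_apply, Finset.sum_apply,
    Pi.smul_apply, Matrix.sub_apply, Matrix.one_apply, Matrix.of_apply, smul_eq_mul, mul_sub,
    mul_ite, mul_one, mul_zero, Finset.sum_sub_distrib, Finset.sum_ite_eq, Finset.mem_univ,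
    if_true]
  by_cases hpq : p = q
  · subst hpq
    rw [if_pos rfl, Finset.filter_ne', Finset.sum_erase_eq_sub (Finset.mem_univ _)]
    simp only [if_true]
  · rw [if_neg (Subtype.coe_ne_coe.mpr hpq)]
    simp only [hpq, if_false, Finset.sum_const_zero, zero_sub]

lemma det_dirichletLap_eq_sum (c : Sym2 V → ℝ) (W : Finset V) :
    (dirichletLap c W).det = ∑ g ∈ Finset.univ.filter (fun g : V → V => ∀ v ∈ W, g v = v),
      (∏ v ∈ Wᶜ, c s(v, g v)) * (1 - stepMatrix W g).det := by
  have hexpand : (dirichletLap c W).det = ∑ r : {v // v ∉ W} → V,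
      (∏ p : {v // v ∉ W}, c s(p, r p)) *
        (Matrix.of fun p => (1 - stepMatrix W fun _ => r p) p).det := by
    rw [Matrix.det, funext (dirichletLap_row c W)]
    refine (Matrix.detRowAlternating.toMultilinearMap.map_sum _).trans
      (Finset.sum_congr rfl fun r _ => ?_)
    rw [AlternatingMap.coe_multilinearMap, AlternatingMap.map_smul_univ, smul_eq_mul]
    rfl
  rw [hexpand]
  symm
  refine Finset.sum_nbij' (fun g p => g p) (fun r v => if h : v ∈ W then v else r ⟨v, h⟩)
    (fun _ _ => Finset.mem_univ _) (fun r _ => ?_) (fun g hg => ?_) (fun r _ => ?_) (fun g _ => ?_)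
  · simp only [Finset.mem_filter, Finset.mem_univ, true_and]
    exact fun v hv => dif_pos hv
  · funext v
    by_cases hv : v ∈ W
    · rw [dif_pos hv, (Finset.mem_filter.mp hg).2 v hv]
    · rw [dif_neg hv]
  · funext p
    exact dif_neg p.2
  · rw [Finset.prod_subtype Wᶜ (fun _ => Finset.mem_compl)]
    rfl

theorem det_dirichletLap (c : Sym2 V → ℝ) (W : Finset V) :
    (dirichletLap c W).det = ∑ B ∈ Finset.univ.filter (IsRootedForest W), wt c B := by
  rw [det_dirichletLap_eq_sum, ← sum_reachesRoots_eq_sum_isRootedForest, ← Finset.filter_filter,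
    Finset.sum_filter (ReachesRoots W)]
  refine Finset.sum_congr rfl fun g _ => ?_
  by_cases hr : ReachesRoots W g
  · rw [if_pos hr, det_one_sub_stepMatrix_of_reachesRoots hr, mul_one]
  · rw [if_neg hr, det_one_sub_stepMatrix_of_not_reachesRoots hr, mul_zero]

lemma det_dlap (c : Sym2 V → ℝ) (b : V) : (dlap c b).det = (dirichletLap c {b}).det :=
  (Matrix.det_submatrix_equiv_self (Equiv.subtypeEquivRight fun v => by simp) _).symm

lemma adjugate_dlap_apply_self (c : Sym2 V → ℝ) {b u : V} (hu : u ≠ b) :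
    (dlap c b).adjugate ⟨u, hu⟩ ⟨u, hu⟩ = (dirichletLap c {b, u}).det := by
  let e : {j : {w // w ≠ b} // j ≠ ⟨u, hu⟩} ≃ {v // v ∉ ({b, u} : Finset V)} :=
    (Equiv.subtypeEquivRight fun j => Subtype.ext_iff.not).trans
      ((Equiv.subtypeSubtypeEquivSubtypeInter (· ≠ b) (· ≠ u)).trans
        (Equiv.subtypeEquivRight fun v => by simp [not_or]))
  rw [Matrix.adjugate_apply_self, ← Matrix.det_submatrix_equiv_self e]
  rfl

end MatrixTree

section Kappa

variable {V : Type*} [Fintype V] [DecidableEq V] (c : Sym2 V → ℝ)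

lemma kappa1_eq_det_dlap (b : V) : kappa1 c = (dlap c b).det := by
  rw [det_dlap, det_dirichletLap, kappa1]
  exact Finset.sum_congr (Finset.filter_congr fun B _ => isRootedForest_singleton_iff.symm)
    fun _ _ => rfl

lemma pr2_mem_floating {b u : V} (hu : u ≠ b) :
    pr2 c (fun B => u ∈ floating b B) =
      (dlap c b).adjugate ⟨u, hu⟩ ⟨u, hu⟩ / kappa2 c := by
  rw [pr2, adjugate_dlap_apply_self c hu, det_dirichletLap]
  congr 1
  refine Finset.sum_congr ?_ fun _ _ => rfl
  ext B
  simp only [Finset.mem_filter, Finset.mem_univ, true_and]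
  exact (isRootedForest_pair_iff hu).symm

lemma kappa1_pos (hc : ∀ e, 0 ≤ c e)
    (hconn : ncomp (Finset.univ.filter fun e : Sym2 V => c e ≠ 0) = 1) : 0 < kappa1 c := by
  obtain ⟨T, hTE, hlink, hcard⟩ :=
    exists_spanning_forest (Finset.univ.filter fun e => c e ≠ 0)
  have hncomp : ncomp T = 1 := by rw [ncomp, hlink]; exact hconn
  have hT : IsSF 1 T := ⟨hncomp, hncomp ▸ hcard⟩
  refine Finset.sum_pos' (fun B _ => Finset.prod_nonneg fun e _ => hc e)
    ⟨T, Finset.mem_filter.mpr ⟨Finset.mem_univ _, hT⟩, Finset.prod_pos fun e he => ?_⟩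
  exact (hc e).lt_of_ne (Finset.mem_filter.mp (hTE he)).2.symm

end Kappa

end TwoSF

open TwoSF

theorem statement_3_general {V : Type*} [Fintype V] [DecidableEq V] (c : Sym2 V → ℝ)
    (hc : ∀ e, 0 ≤ c e)
    (hconn : ncomp (Finset.univ.filter fun e : Sym2 V => c e ≠ 0) = 1)
    (b u : V) (hu : u ≠ b) :
    pr2 c (fun B => u ∈ floating b B) = kappa1 c / kappa2 c * green c b u u := by
  have hκ : kappa1 c ≠ 0 := (kappa1_pos c hc hconn).ne'
  have hgreen : green c b u u = (kappa1 c)⁻¹ * (dlap c b).adjugate ⟨u, hu⟩ ⟨u, hu⟩ := by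
    rw [green, dif_neg hu, dif_neg hu, Matrix.inv_def, Matrix.smul_apply, Ring.inverse_eq_inv',
      ← kappa1_eq_det_dlap, smul_eq_mul]
  rw [pr2_mem_floating c hu, hgreen]
  field_simp

/-- For a finite connected undirected graph with positive
conductances (`c` vanishes exactly off the edge set, and there are no loops)
and marked vertex `b`, the probability that a vertex `u ≠ b` lies in the
floating component `Σ` of a weight-proportional random two-component spanning
forest equals `(κ/κ₂) · G_{u,u}`. -/
theorem statement_3 {V : Type*} [Fintype V] [DecidableEq V] (c : Sym2 V → ℝ)
    (hc : ∀ e, 0 ≤ c e) (hloop : ∀ v : V, c s(v, v) = 0)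
    (hconn : ncomp (Finset.univ.filter fun e : Sym2 V => c e ≠ 0) = 1)
    (b u : V) (hu : u ≠ b) :
    pr2 c (fun B => u ∈ floating b B) = kappa1 c / kappa2 c * green c b u u :=
  statement_3_general c hc hconn b u hu
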